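/- arXiv:2407.09937 — 2 statements merged into one kernel-verified Lean document; each statement's English description precedes it below -/
import Mathlib

section
/- Let 𝔤 be a finite-dimensional real Lie algebra with n := dim 𝔤, let 𝔥 ⊆ 𝔤 be a Cartan subalgebra, and define the linear subspace 𝔤_𝔥 := Σ_{h ∈ 𝔥} (ad h)^n(𝔤) ⊆ 𝔤 (the span of the ranges of the operators (ad h)^n for h ∈ 𝔥). If the ideal 𝔤^∞ := ⋂_{j≥1} 𝔤^j is abelian, then 𝔤^∞ = 𝔤_𝔥. -/
/-!
Let `𝔣 := ⋂ₖ C^k_𝔥(𝔤)` be the positive Fitting component of `𝔤` viewed as a module over the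
nilpotent algebra `𝔥`. For each `h ∈ 𝔥` the Fitting component of `ad h` is the range of
`(ad h)^n`, so `𝔤_𝔥 = 𝔣`, and `C^k_𝔥(𝔤) ⊆ 𝔤^k` gives `𝔣 ⊆ 𝔤^∞`. Conversely, `𝔥` is the zero
weight space, so the Fitting decomposition reads `𝔤 = 𝔥 ⊕ 𝔣`; as `𝔣 ⊆ 𝔤^∞` and `𝔤^∞` is abelian,
`𝔤^∞ = [𝔤, 𝔤^∞] = [𝔥, 𝔤^∞]`, and iterating this puts `𝔤^∞` inside every `C^k_𝔥(𝔤)`.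
-/

open LieModule LieAlgebra Module

namespace Module.End

variable {K V : Type*} [DivisionRing K] [AddCommGroup V] [Module K V] [FiniteDimensional K V]

theorem range_pow_eq_range_pow_finrank_of_le {f : End K V} {m : ℕ} (hm : finrank K V ≤ m) :
    LinearMap.range (f ^ m) = LinearMap.range (f ^ finrank K V) := by
  have hle : LinearMap.range (f ^ m) ≤ LinearMap.range (f ^ finrank K V) :=
    (LinearMap.iterateRange f).monotone hm
  refine Submodule.eq_of_le_of_finrank_le hle ?_
  have hm' := LinearMap.finrank_range_add_finrank_ker (f ^ m)
  have hn := LinearMap.finrank_range_add_finrank_ker (f ^ finrank K V)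
  rw [ker_pow_eq_ker_pow_finrank_of_le hm] at hm'
  omega

theorem iInf_range_pow_eq_range_pow_finrank (f : End K V) :
    ⨅ k, LinearMap.range (f ^ k) = LinearMap.range (f ^ finrank K V) := by
  refine le_antisymm (iInf_le _ _) (le_iInf fun k ↦ ?_)
  rcases le_total k (finrank K V) with hk | hk
  · exact (LinearMap.iterateRange f).monotone hk
  · exact (range_pow_eq_range_pow_finrank_of_le hk).ge

end Module.End

namespace LieModule

section CommRing

variable {R L M : Type*} [CommRing R] [LieRing L] [LieAlgebra R L]
  [AddCommGroup M] [Module R M] [LieRingModule L M]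

lemma le_lowerCentralSeries_of_le_lie_top {N : LieSubmodule R L M}
    (hN : N ≤ ⁅(⊤ : LieIdeal R L), N⁆) (k : ℕ) : N ≤ lowerCentralSeries R L M k := by
  induction k with
  | zero => exact le_top
  | succ k ih =>
    rw [lowerCentralSeries_succ]
    exact hN.trans (LieSubmodule.mono_lie_right ⊤ ih)

lemma lie_top_iInf_lowerCentralSeries [IsArtinian R M] :
    ⁅(⊤ : LieIdeal R L), ⨅ k, lowerCentralSeries R L M k⁆ = ⨅ k, lowerCentralSeries R L M k := by
  obtain ⟨n, hn⟩ := Filter.eventually_atTop.mp (eventually_iInf_lowerCentralSeries_eq R L M)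
  rw [hn n le_rfl, ← lowerCentralSeries_succ]
  exact (hn (n + 1) n.le_succ).symm.trans (hn n le_rfl)

lemma lowerCentralSeries_le_restr (H : LieSubalgebra R L) (k : ℕ) :
    lowerCentralSeries R H M k ≤ (lowerCentralSeries R L M k).restr H := by
  induction k with
  | zero => exact le_top
  | succ k ih =>
    rw [lowerCentralSeries_succ, LieSubmodule.lie_le_iff]
    intro x _ m hm
    rw [LieSubmodule.mem_restr, lowerCentralSeries_succ]
    exact LieSubmodule.lie_mem_lie (LieSubmodule.mem_top (x : L)) (ih hm)

lemma posFittingComp_le_restr_iInf_lowerCentralSeries [LieModule R L M] (H : LieSubalgebra R L)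
    [LieRing.IsNilpotent H] :
    posFittingComp R H M ≤ (⨅ k, lowerCentralSeries R L M k).restr H := by
  intro m hm
  rw [LieSubmodule.mem_restr, LieSubmodule.mem_iInf]
  intro k
  exact lowerCentralSeries_le_restr H k
    ((LieSubmodule.mem_iInf _).mp (posFittingComp_le_iInf_lowerCentralSeries R H M hm) k)

lemma restr_lie_top_le_of_sup_eq_top [LieModule R L M] {H : LieSubalgebra R L} {F : Submodule R L}
    {N : LieSubmodule R L M} (hHF : H.toSubmodule ⊔ F = ⊤) (hF : ∀ x ∈ F, ∀ m ∈ N, ⁅x, m⁆ = 0) :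
    (⁅(⊤ : LieIdeal R L), N⁆).restr H ≤ ⁅(⊤ : LieIdeal R H), N.restr H⁆ := by
  rw [← LieSubmodule.toSubmodule_le_toSubmodule, LieSubmodule.restr_toSubmodule,
    LieSubmodule.lieIdeal_oper_eq_linear_span', Submodule.span_le]
  rintro _ ⟨x, -, m, hm, rfl⟩
  obtain ⟨h, hh, f, hf, rfl⟩ :=
    Submodule.mem_sup.mp (hHF ▸ Submodule.mem_top : x ∈ H.toSubmodule ⊔ F)
  rw [add_lie, hF f hf m hm, add_zero]
  exact LieSubmodule.lie_mem_lie (LieSubmodule.mem_top (⟨h, hh⟩ : H)) hm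

end CommRing

section Field

variable {K L M : Type*} [Field K] [LieRing L] [LieAlgebra K L] [LieRing.IsNilpotent L]
  [AddCommGroup M] [Module K M] [LieRingModule L M] [LieModule K L M] [FiniteDimensional K M]

lemma posFittingCompOf_toSubmodule_eq_range_pow_finrank (x : L) :
    (posFittingCompOf K M x).toSubmodule = LinearMap.range (toEnd K L M x ^ finrank K M) :=
  (toEnd K L M x).iInf_range_pow_eq_range_pow_finrank

lemma posFittingComp_toSubmodule_eq_iSup_range_pow_finrank :
    (posFittingComp K L M).toSubmodule =
      ⨆ x : L, LinearMap.range (toEnd K L M x ^ finrank K M) := by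
  simp only [posFittingComp, LieSubmodule.iSup_toSubmodule,
    posFittingCompOf_toSubmodule_eq_range_pow_finrank]

end Field

end LieModule

namespace LieSubalgebra

lemma toSubmodule_sup_posFittingComp_eq_top {R L : Type*} [CommRing R] [LieRing L]
    [LieAlgebra R L] [IsNoetherian R L] [IsArtinian R L] (H : LieSubalgebra R L)
    [H.IsCartanSubalgebra] :
    H.toSubmodule ⊔ (posFittingComp R H L).toSubmodule = ⊤ := by
  rw [← coe_toLieSubmodule, ← rootSpace_zero_eq R L H, ← LieSubmodule.sup_toSubmodule,
    (isCompl_genWeightSpace_zero_posFittingComp R H L).sup_eq_top, LieSubmodule.top_toSubmodule]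

end LieSubalgebra

/-- If `𝔤^∞ := ⋂_{j≥1} 𝔤^j` is abelian, then for every Cartan subalgebra `𝔥` of the
`n`-dimensional real Lie algebra `𝔤` one has `𝔤^∞ = 𝔤_𝔥 := Σ_{h ∈ 𝔥} (ad h)^n(𝔤)`. -/
theorem stmt2 (L : Type*) [LieRing L] [LieAlgebra ℝ L] [Module.Finite ℝ L]
    (H : LieSubalgebra ℝ L) (hH : H.IsCartanSubalgebra)
    (habelian : ∀ x ∈ (⨅ k, LieModule.lowerCentralSeries ℝ L L k),
      ∀ y ∈ (⨅ k, LieModule.lowerCentralSeries ℝ L L k), ⁅x, y⁆ = 0) :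
    (⨅ k, LieModule.lowerCentralSeries ℝ L L k).toSubmodule
      = ⨆ h ∈ H, LinearMap.range ((LieAlgebra.ad ℝ L h) ^ (Module.finrank ℝ L)) := by
  have : LieRing.IsNilpotent H := hH.nilpotent
  set I := ⨅ k, lowerCentralSeries ℝ L L k
  have hRHS : (⨆ h ∈ H, LinearMap.range (ad ℝ L h ^ finrank ℝ L))
      = (posFittingComp ℝ H L).toSubmodule := by
    rw [posFittingComp_toSubmodule_eq_iSup_range_pow_finrank, iSup_subtype']
    rfl
  have hFI : posFittingComp ℝ H L ≤ I.restr H :=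
    posFittingComp_le_restr_iInf_lowerCentralSeries H
  have hIF : I.restr H ≤ posFittingComp ℝ H L := by
    rw [← iInf_lowerCentralSeries_eq_posFittingComp, le_iInf_iff]
    refine le_lowerCentralSeries_of_le_lie_top ?_
    have hI : ⁅(⊤ : LieIdeal ℝ L), I⁆ = I := lie_top_iInf_lowerCentralSeries
    conv_lhs => rw [← hI]
    exact restr_lie_top_le_of_sup_eq_top H.toSubmodule_sup_posFittingComp_eq_top
      fun x hx y hy ↦ habelian x (hFI hx) y hy
  rw [hRHS, ← LieSubmodule.restr_toSubmodule I H, le_antisymm hIF hFI]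
end

section
/- Let 𝔤 be a finite-dimensional real Lie algebra with trivial centre such that the ideal 𝔤^∞ := ⋂_{j≥1} 𝔤^j is abelian. Then the centralizer of 𝔤^∞ in 𝔤 equals 𝔤^∞, i.e. { x ∈ 𝔤 : [x, y] = 0 for all y ∈ 𝔤^∞ } = 𝔤^∞. -/
/-!
Let `I = 𝔤^∞` and let `C = LieModule.ker ℝ 𝔤 I` be its centralizer, an ideal of `𝔤` on which `I`
acts trivially. Since `𝔤 / I` is nilpotent, the image `A` of `𝔤` in `End C` is a nilpotent Lie
algebra, so `C` has a Fitting decomposition `C = C₀ ⊕ C₊` under `A`. The zero component `C₀` is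
the union of the upper central series of `C`, which vanishes because a vector of `C` killed by
all of `𝔤` is central. Hence `C = C₊ ⊆ ⋂ₖ 𝔤^k = I`; conversely `I ⊆ C` because `I` is abelian.
-/

open LieModule

namespace LieHom

variable {R L L' : Type*} [CommRing R] [LieRing L] [LieAlgebra R L] [LieRing L'] [LieAlgebra R L']

theorem isNilpotent_range_of_lowerCentralSeries_le_ker (f : L →ₗ⁅R⁆ L') {k : ℕ}
    (hk : lowerCentralSeries R L L k ≤ f.ker) : LieRing.IsNilpotent f.range := by
  rw [LieRing.IsNilpotent, LieModule.isNilpotent_iff R]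
  refine ⟨k, ?_⟩
  rw [← LieIdeal.lowerCentralSeries_map_eq k f.surjective_rangeRestrict, LieIdeal.map_eq_bot_iff]
  intro x hx
  rw [LieHom.mem_ker, rangeRestrict_apply]
  exact Subtype.ext (LieHom.mem_ker.mp (hk hx))

end LieHom

namespace LieModule

variable {R L M : Type*} [CommRing R] [LieRing L] [LieAlgebra R L]
  [AddCommGroup M] [Module R M] [LieRingModule L M] [LieModule R L M]

attribute [local instance 100] LieRing.ofAssociativeRing

theorem genWeightSpace_zero_eq_bot_of_maxTrivSubmodule_eq_bot [LieRing.IsNilpotent L]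
    [IsNoetherian R M] (h : maxTrivSubmodule R L M = ⊥) :
    genWeightSpace M (0 : L → R) = ⊥ := by
  have hucs := LieSubmodule.ucs_eq_self_of_normalizer_eq_self
    (LieSubmodule.normalizer_bot_eq_maxTrivSubmodule R L M ▸ h)
  rw [← iSup_ucs_eq_genWeightSpace_zero]
  simp only [hucs, iSup_const]

theorem iInf_lowerCentralSeries_eq_top_of_maxTrivSubmodule_eq_bot [LieRing.IsNilpotent L]
    [IsNoetherian R M] [IsArtinian R M] (h : maxTrivSubmodule R L M = ⊥) :
    ⨅ k, lowerCentralSeries R L M k = ⊤ := by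
  have hfit := isCompl_genWeightSpace_zero_posFittingComp R L M
  rw [genWeightSpace_zero_eq_bot_of_maxTrivSubmodule_eq_bot h] at hfit
  rw [← top_le_iff, ← eq_top_of_bot_isCompl hfit]
  exact posFittingComp_le_iInf_lowerCentralSeries R L M

theorem maxTrivSubmodule_range_toEnd_eq_bot (h : maxTrivSubmodule R L M = ⊥) :
    maxTrivSubmodule R (toEnd R L M).range M = ⊥ := by
  rw [eq_bot_iff] at h ⊢
  intro m hm
  exact h fun x => hm ⟨toEnd R L M x, (toEnd R L M).mem_range_self x⟩

theorem iInf_lowerCentralSeries_eq_top_of_lowerCentralSeries_le_ker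
    [IsNoetherian R M] [IsArtinian R M] {k : ℕ}
    (hk : lowerCentralSeries R L L k ≤ LieModule.ker R L M) (h : maxTrivSubmodule R L M = ⊥) :
    ⨅ k, lowerCentralSeries R L M k = ⊤ := by
  have := (toEnd R L M).isNilpotent_range_of_lowerCentralSeries_le_ker hk
  have hA := iInf_lowerCentralSeries_eq_top_of_maxTrivSubmodule_eq_bot
    (maxTrivSubmodule_range_toEnd_eq_bot h)
  rw [iInf_eq_top] at hA ⊢
  intro i
  rw [← LieSubmodule.toSubmodule_inj, ← coe_lcs_range_toEnd_eq, hA i]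
  rfl

end LieModule

namespace LieIdeal

variable {R L : Type*} [CommRing R] [LieRing L] [LieAlgebra R L]

theorem le_lowerCentralSeries_of_lowerCentralSeries_eq_top {J : LieIdeal R L} {k : ℕ}
    (h : lowerCentralSeries R L J k = ⊤) : J ≤ lowerCentralSeries R L L k := by
  intro x hx
  have hmem : (⟨x, hx⟩ : J) ∈ lowerCentralSeries R L J k := h ▸ LieSubmodule.mem_top _
  exact LieModule.map_lowerCentralSeries_le k (LieSubmodule.incl J)
    (LieSubmodule.mem_map_of_mem hmem)

theorem maxTrivSubmodule_eq_bot_of_center_eq_bot (J : LieIdeal R L)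
    (h : LieAlgebra.center R L = ⊥) : maxTrivSubmodule R L J = ⊥ := by
  rw [eq_bot_iff]
  intro z hz
  have hzc : (z : L) ∈ LieAlgebra.center R L := fun x => congrArg Subtype.val (hz x)
  rw [h, LieSubmodule.mem_bot] at hzc
  exact (LieSubmodule.mem_bot z).mpr (Subtype.ext hzc)

theorem le_ker_ker (I : LieIdeal R L) : I ≤ LieModule.ker R L (LieModule.ker R L I) := by
  intro x hx
  rw [LieModule.mem_ker]
  intro z
  have hz := congrArg Subtype.val ((LieModule.mem_ker _ _ _ _).mp z.2 ⟨x, hx⟩)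
  ext
  simp only [LieSubmodule.coe_bracket, LieSubmodule.coe_zero] at hz ⊢
  rw [← lie_skew, hz, neg_zero]

end LieIdeal

theorem LieAlgebra.ker_iInf_lowerCentralSeries_le {R L : Type*} [CommRing R] [LieRing L]
    [LieAlgebra R L] [IsNoetherian R L] [IsArtinian R L] (h : center R L = ⊥) :
    LieModule.ker R L (⨅ k, lowerCentralSeries R L L k : LieIdeal R L) ≤
      ⨅ k, lowerCentralSeries R L L k := by
  obtain ⟨k, hk⟩ := (eventually_iInf_lowerCentralSeries_eq R L L).exists
  set I : LieIdeal R L := ⨅ k, lowerCentralSeries R L L k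
  have hC := iInf_lowerCentralSeries_eq_top_of_lowerCentralSeries_le_ker
    (hk.ge.trans I.le_ker_ker) ((LieModule.ker R L I).maxTrivSubmodule_eq_bot_of_center_eq_bot h)
  exact le_iInf fun j =>
    LieIdeal.le_lowerCentralSeries_of_lowerCentralSeries_eq_top (iInf_eq_top.mp hC j)

/-- If a finite-dimensional real Lie algebra `𝔤` has trivial centre and the ideal
`𝔤^∞ := ⋂_{j≥1} 𝔤^j` is abelian, then the centralizer of `𝔤^∞` in `𝔤` equals `𝔤^∞`. -/
theorem stmt4 (L : Type*) [LieRing L] [LieAlgebra ℝ L] [Module.Finite ℝ L]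
    (hcenter : LieAlgebra.center ℝ L = ⊥)
    (habelian : ∀ x ∈ (⨅ k, LieModule.lowerCentralSeries ℝ L L k),
      ∀ y ∈ (⨅ k, LieModule.lowerCentralSeries ℝ L L k), ⁅x, y⁆ = 0) :
    ∀ x : L, (∀ y ∈ (⨅ k, LieModule.lowerCentralSeries ℝ L L k), ⁅x, y⁆ = 0) ↔
      x ∈ (⨅ k, LieModule.lowerCentralSeries ℝ L L k) := by
  refine fun x => ⟨fun hx => LieAlgebra.ker_iInf_lowerCentralSeries_le hcenter ?_,
    fun hx => habelian x hx⟩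
  exact (LieModule.mem_ker _ _ _ _).mpr fun y => Subtype.ext (hx y y.2)
end
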